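/- Let C and D be categories with finite colimits and let G : C → D be a functor that preserves pushout squares. Then for every finite set S with |S| ≥ 2 and every punctured S-cube F : P_{≤|S|−1}(S) → C, the functor G preserves the colimit of F; that is, the canonical map colim(G ∘ F) → G(colim F) is an isomorphism. (Claim established in the proof of Proposition 3.1.12 via Lemma 3.1.11: a pushout-preserving functor preserves colimits of punctured cubes.) -/

import Mathlib

open CategoryTheory CategoryTheory.Limits

/- Finite posets (with decidable order) are finite categories, so that the colimits below
exist in categories with finite colimits. -/
instance fintypeHomOfPreorder {α : Type} [Preorder α] [DecidableRel (α := α) (· ≤ ·)]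
    (X Y : α) : Fintype (X ⟶ Y) :=
  if h : X ≤ Y then Fintype.ofSubsingleton (homOfLE h)
  else haveI : IsEmpty (X ⟶ Y) := ⟨fun g => h (leOfHom g)⟩; Fintype.ofIsEmpty

instance finCategoryOfPreorder {α : Type} [Preorder α] [Fintype α]
    [DecidableRel (α := α) (· ≤ ·)] : FinCategory α where

/-- The punctured cube poset `P_{≤ |S| - 1}(S)` of subsets of `S` of cardinality `≤ |S| - 1`. -/
abbrev PuncturedCubePoset (S : Type) [Fintype S] [DecidableEq S] : Type :=
  {I : Finset S // I.card ≤ Fintype.card S - 1}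

/-!
Fix `s ∈ S`. The punctured `S`-cube is the union of the subsets avoiding `s`, which have the
terminal object `S ∖ {s}`, and the upper set of subsets containing `s`, which is a punctured
`(S ∖ {s})`-cube via `K ↦ K ∪ {s}`. Every inclusion from the first part into the second factors
through a pair `K ⊆ K ∪ {s}` with `K` in the punctured `(S ∖ {s})`-cube, so the colimit of a
punctured `S`-cube is the pushout of the colimits over these three pieces. By induction on `|S|`
(for `|S| ≤ 1` the punctured cube has the terminal object `∅`), `G` preserves the three colimits,
and it preserves the pushout by hypothesis.
-/

lemma preservesColimitsOfShape_of_isTerminal {C D J : Type*} [Category C] [Category D]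
    [Category J] {T : J} (hT : IsTerminal T) (G : C ⥤ D) : PreservesColimitsOfShape J G where
  preservesColimit {K} := preservesColimit_of_preserves_colimit_cocone
    (colimitOfDiagramTerminal hT K)
    ((colimitOfDiagramTerminal hT (K ⋙ G)).ofIsoColimit (Cocone.ext (Iso.refl _)))

section UpperSetGluing

variable {C : Type*} [Category C] {P : Type*} [Preorder P]

/- Spelled out rather than as `(Subtype.mono_coe _).functor ⋙ F` so that `(F.restrict U).obj b`
is reducibly `F.obj b`: composites mixing the two can then be rewritten. -/
abbrev CategoryTheory.Functor.restrict (F : P ⥤ C) (U : Set P) : U ⥤ C where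
  obj b := F.obj b
  map f := F.map (homOfLE (leOfHom f))
  map_id b := F.map_id (b : P)
  map_comp f g := F.map_comp (homOfLE (leOfHom f)) (homOfLE (leOfHom g))

abbrev CategoryTheory.Limits.Cocone.restrict {F : P ⥤ C} (t : Cocone F) (U : Set P) :
    Cocone (F.restrict U) where
  pt := t.pt
  ι.app b := t.ι.app b
  ι.naturality _ _ f := t.ι.naturality (homOfLE (leOfHom f))

variable {U : Set P} {M : Type*} [Category M] {j₀ : M ⥤ ↥Uᶜ} {j₁ : M ⥤ U}
  (hj : ∀ m, (j₀.obj m : P) ≤ j₁.obj m) {F : P ⥤ C}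

section GluedCocone

variable (hfac : ∀ (a : ↥Uᶜ) (b : U), (a : P) ≤ b → ∃ m, (a : P) ≤ j₀.obj m ∧ (j₁.obj m : P) ≤ b)
  (c₀ : Cocone (F.restrict Uᶜ)) (c₁ : Cocone (F.restrict U))
  {W : C} (inl : c₀.pt ⟶ W) (inr : c₁.pt ⟶ W)
  (hw : ∀ m, c₀.ι.app (j₀.obj m) ≫ inl = F.map (homOfLE (hj m)) ≫ c₁.ι.app (j₁.obj m) ≫ inr)

include hfac hw in
lemma map_comp_ι_comp_inr_of_le (a : ↥Uᶜ) (b : U) (hab : (a : P) ≤ b) :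
    F.map (homOfLE hab) ≫ c₁.ι.app b ≫ inr = c₀.ι.app a ≫ inl := by
  obtain ⟨m, ham, hmb⟩ := hfac a b hab
  have hab' : homOfLE hab = homOfLE ham ≫ homOfLE (hj m) ≫ homOfLE hmb := rfl
  rw [hab', F.map_comp_assoc, F.map_comp_assoc, c₁.w_assoc (homOfLE hmb : j₁.obj m ⟶ b), ← hw,
    c₀.w_assoc (homOfLE ham : a ⟶ j₀.obj m)]

open Classical in
noncomputable def IsUpperSet.gluedCocone (hU : IsUpperSet U) : Cocone F where
  pt := W
  ι.app x := if h : x ∈ U then c₁.ι.app ⟨x, h⟩ ≫ inr else c₀.ι.app ⟨x, h⟩ ≫ inl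
  ι.naturality x y f := by
    have hxy := leOfHom f
    simp only [Functor.const_obj_obj, Functor.const_obj_map, Category.comp_id]
    by_cases hy : y ∈ U
    · rw [dif_pos hy]
      by_cases hx : x ∈ U
      · rw [dif_pos hx]
        exact c₁.w_assoc (homOfLE hxy : (⟨x, hx⟩ : U) ⟶ ⟨y, hy⟩) inr
      · rw [dif_neg hx]
        exact map_comp_ι_comp_inr_of_le hj hfac c₀ c₁ inl inr hw ⟨x, hx⟩ ⟨y, hy⟩ hxy
    · have hx : x ∉ U := fun hx => hy (hU hxy hx)
      rw [dif_neg hx, dif_neg hy]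
      exact c₀.w_assoc (homOfLE hxy : (⟨x, hx⟩ : ↥Uᶜ) ⟶ ⟨y, hy⟩) inl

variable (hU : IsUpperSet U)

lemma IsUpperSet.gluedCocone_ι_app_compl (a : ↥Uᶜ) :
    (hU.gluedCocone hj hfac c₀ c₁ inl inr hw).ι.app a = c₀.ι.app a ≫ inl :=
  dif_neg a.2

lemma IsUpperSet.gluedCocone_ι_app (b : U) :
    (hU.gluedCocone hj hfac c₀ c₁ inl inr hw).ι.app b = c₁.ι.app b ≫ inr :=
  dif_pos b.2

end GluedCocone

section Pushout

variable {c₀ : Cocone (F.restrict Uᶜ)} {c₁ : Cocone (F.restrict U)}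
  {c : Cocone (j₀ ⋙ F.restrict Uᶜ)} {u : c.pt ⟶ c₀.pt} {v : c.pt ⟶ c₁.pt}
  (hc₀ : IsColimit c₀) (hc₁ : IsColimit c₁) (hc : IsColimit c)
  (hu : ∀ m, c.ι.app m ≫ u = c₀.ι.app (j₀.obj m))
  (hv : ∀ m, c.ι.app m ≫ v = F.map (homOfLE (hj m)) ≫ c₁.ι.app (j₁.obj m))
  (d : Cocone F) {inl : c₀.pt ⟶ d.pt} {inr : c₁.pt ⟶ d.pt}
  (hinl : ∀ a, c₀.ι.app a ≫ inl = d.ι.app a) (hinr : ∀ b, c₁.ι.app b ≫ inr = d.ι.app b)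

noncomputable def isColimitOfIsPushout (hp : IsPushout u v inl inr) : IsColimit d where
  desc t := hp.desc (hc₀.desc (t.restrict Uᶜ)) (hc₁.desc (t.restrict U)) <|
    hc.hom_ext fun m => by
      rw [reassoc_of% hu, reassoc_of% hv, hc₀.fac, hc₁.fac]
      exact (t.w (homOfLE (hj m))).symm
  fac t x := by
    by_cases hx : x ∈ U
    · rw [← hinr ⟨x, hx⟩, Category.assoc, hp.inr_desc]
      exact hc₁.fac _ ⟨x, hx⟩
    · rw [← hinl ⟨x, hx⟩, Category.assoc, hp.inl_desc]
      exact hc₀.fac _ ⟨x, hx⟩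
  uniq t f hf := by
    refine hp.hom_ext (hc₀.hom_ext fun a => ?_) (hc₁.hom_ext fun b => ?_)
    · rw [reassoc_of% hinl, hp.inl_desc, hc₀.fac, hf]
    · rw [reassoc_of% hinr, hp.inr_desc, hc₁.fac, hf]

variable {D : Type*} [Category D] (G : C ⥤ D) [PreservesColimit (F.restrict Uᶜ) G]
  [PreservesColimit (F.restrict U) G] [PreservesColimit (j₀ ⋙ F.restrict Uᶜ) G]

noncomputable def isColimitMapCoconeOfIsPushout
    (hp : IsPushout (G.map u) (G.map v) (G.map inl) (G.map inr)) : IsColimit (G.mapCocone d) :=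
  isColimitOfIsPushout (F := F ⋙ G) hj (isColimitOfPreserves G hc₀) (isColimitOfPreserves G hc₁)
    (isColimitOfPreserves G hc)
    (fun m => (G.map_comp _ _).symm.trans (congrArg G.map (hu m)))
    (fun m => (G.map_comp _ _).symm.trans ((congrArg G.map (hv m)).trans (G.map_comp _ _)))
    (G.mapCocone d) (fun a => (G.map_comp _ _).symm.trans (congrArg G.map (hinl a)))
    (fun b => (G.map_comp _ _).symm.trans (congrArg G.map (hinr b))) hp

end Pushout

variable {D : Type*} [Category D]

include hj in
lemma IsUpperSet.preservesColimitsOfShape (hU : IsUpperSet U)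
    (hfac : ∀ (a : ↥Uᶜ) (b : U), (a : P) ≤ b → ∃ m, (a : P) ≤ j₀.obj m ∧ (j₁.obj m : P) ≤ b)
    [HasColimitsOfShape ↥Uᶜ C] [HasColimitsOfShape U C] [HasColimitsOfShape M C] [HasPushouts C]
    (G : C ⥤ D) [PreservesColimitsOfShape ↥Uᶜ G] [PreservesColimitsOfShape U G]
    [PreservesColimitsOfShape M G]
    (hG : ∀ {X Y Z W : C} (f : X ⟶ Y) (g : X ⟶ Z) (inl : Y ⟶ W) (inr : Z ⟶ W),
      IsPushout f g inl inr → IsPushout (G.map f) (G.map g) (G.map inl) (G.map inr)) :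
    PreservesColimitsOfShape P G where
  preservesColimit {F} := by
    let θ : j₀ ⋙ F.restrict Uᶜ ⟶ j₁ ⋙ F.restrict U :=
      { app m := F.map (homOfLE (hj m))
        naturality _ _ _ := by dsimp; rw [← F.map_comp, ← F.map_comp]; rfl }
    let u := colimit.pre (F.restrict Uᶜ) j₀
    let v := colimMap θ ≫ colimit.pre (F.restrict U) j₁
    have hu : ∀ m, colimit.ι (j₀ ⋙ F.restrict Uᶜ) m ≫ u = colimit.ι (F.restrict Uᶜ) (j₀.obj m) :=
      colimit.ι_pre _ _
    have hv : ∀ m, colimit.ι (j₀ ⋙ F.restrict Uᶜ) m ≫ v =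
        F.map (homOfLE (hj m)) ≫ colimit.ι (F.restrict U) (j₁.obj m) := fun m => by
      simp [v, θ]
    have hp := IsPushout.of_hasPushout u v
    let d := hU.gluedCocone hj hfac (colimit.cocone _) (colimit.cocone _) (pushout.inl u v)
      (pushout.inr u v) fun m => by
        simp only [colimit.cocone_ι]
        rw [← reassoc_of% hu, hp.w, reassoc_of% hv]
    have hinl : ∀ a, colimit.ι (F.restrict Uᶜ) a ≫ pushout.inl u v = d.ι.app a :=
      fun a => (hU.gluedCocone_ι_app_compl ..).symm
    have hinr : ∀ b, colimit.ι (F.restrict U) b ≫ pushout.inr u v = d.ι.app b :=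
      fun b => (hU.gluedCocone_ι_app ..).symm
    exact preservesColimit_of_preserves_colimit_cocone
      (isColimitOfIsPushout hj (colimit.isColimit _) (colimit.isColimit _) (colimit.isColimit _)
        hu hv d hinl hinr hp)
      (isColimitMapCoconeOfIsPushout hj (colimit.isColimit _) (colimit.isColimit _)
        (colimit.isColimit _) hu hv d hinl hinr G (hG _ _ _ _ hp))

end UpperSetGluing

namespace PuncturedCubePoset

variable {S : Type} [Fintype S] [DecidableEq S]

def isTerminalEmpty (h : Fintype.card S ≤ 1) :
    IsTerminal (⟨∅, by simp⟩ : PuncturedCubePoset S) :=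
  IsTerminal.ofUniqueHom
    (fun I => homOfLE (Finset.card_eq_zero.mp (by have := I.2; omega)).le)
    (fun _ _ => Subsingleton.elim _ _)

variable (s : S)

lemma isUpperSet_setOf_mem : IsUpperSet {I : PuncturedCubePoset S | s ∈ I.1} :=
  fun _ _ h hs => h hs

def isTerminalErase : IsTerminal (⟨⟨Finset.univ.erase s, by simp⟩, Finset.notMem_erase s _⟩ :
    ↥{I : PuncturedCubePoset S | s ∈ I.1}ᶜ) :=
  IsTerminal.ofUniqueHom
    (fun I => homOfLE (Finset.subset_erase.mpr ⟨Finset.subset_univ _, I.2⟩))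
    (fun _ _ => Subsingleton.elim _ _)

lemma card_subtype_ne : Fintype.card {x // x ≠ s} = Fintype.card S - 1 := by
  simp [Fintype.card_subtype_compl]

def insertOrderIso (hS : 2 ≤ Fintype.card S) :
    PuncturedCubePoset {x // x ≠ s} ≃o {I : PuncturedCubePoset S | s ∈ I.1} where
  toFun A := ⟨⟨insert s (A.1.map (Function.Embedding.subtype _)), by
      have := Finset.card_insert_le s (A.1.map (Function.Embedding.subtype _))
      have := A.2
      have := card_subtype_ne s
      simp only [Finset.card_map] at *
      omega⟩, Finset.mem_insert_self s _⟩
  invFun B := ⟨B.1.1.subtype (· ≠ s), by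
      have := B.1.2
      have := card_subtype_ne s
      rw [Finset.card_subtype, Finset.filter_ne', Finset.card_erase_of_mem B.2]
      omega⟩
  left_inv A := by ext x; simp [x.2]
  right_inv B := by
    ext x
    by_cases hx : x = s
    · simp only [hx, Finset.mem_insert, true_or, true_iff]
      exact B.2
    · simp [hx]
  map_rel_iff' := by simp

def mapSubtypeFunctor :
    PuncturedCubePoset {x // x ≠ s} ⥤ ↥{I : PuncturedCubePoset S | s ∈ I.1}ᶜ :=
  Monotone.functor (f := fun A => ⟨⟨A.1.map (Function.Embedding.subtype _), by
      have := A.2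
      have := card_subtype_ne s
      rw [Finset.card_map]
      omega⟩, by simp⟩)
    (fun _ _ h => Finset.map_subset_map.mpr h)

variable {C : Type*} [Category C] {D : Type*} [Category D]

lemma preservesColimitsOfShape_of_subtype_ne [HasFiniteColimits C] (G : C ⥤ D)
    (hG : ∀ {X Y Z W : C} (f : X ⟶ Y) (g : X ⟶ Z) (inl : Y ⟶ W) (inr : Z ⟶ W),
      IsPushout f g inl inr → IsPushout (G.map f) (G.map g) (G.map inl) (G.map inr))
    (hS : 2 ≤ Fintype.card S) [PreservesColimitsOfShape (PuncturedCubePoset {x // x ≠ s}) G] :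
    PreservesColimitsOfShape (PuncturedCubePoset S) G :=
  have := preservesColimitsOfShape_of_equiv (insertOrderIso s hS).equivalence G
  have := preservesColimitsOfShape_of_isTerminal (isTerminalErase s) G
  (isUpperSet_setOf_mem s).preservesColimitsOfShape (j₀ := mapSubtypeFunctor s)
    (j₁ := (insertOrderIso s hS).monotone.functor) (fun _ => Finset.subset_insert _ _)
    (fun a b hab => ⟨(insertOrderIso s hS).symm b, fun x hx => by
      change x ∈ (b.1.1.subtype (· ≠ s)).map (Function.Embedding.subtype _)
      simp only [Finset.subtype_map, Finset.mem_filter]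
      exact ⟨hab hx, fun h => a.2 (h ▸ hx)⟩, by simp⟩) G hG

end PuncturedCubePoset

theorem preservesColimitsOfShape_puncturedCubePoset {C D : Type*} [Category C] [Category D]
    [HasFiniteColimits C] (G : C ⥤ D)
    (hG : ∀ {X Y Z W : C} (f : X ⟶ Y) (g : X ⟶ Z) (inl : Y ⟶ W) (inr : Z ⟶ W),
      IsPushout f g inl inr → IsPushout (G.map f) (G.map g) (G.map inl) (G.map inr))
    (S : Type) [Fintype S] [DecidableEq S] :
    PreservesColimitsOfShape (PuncturedCubePoset S) G := by
  revert ‹Fintype S› ‹DecidableEq S›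
  refine Finite.induction_subsingleton_or_nontrivial
    (P := fun S => ∀ [Fintype S] [DecidableEq S],
      PreservesColimitsOfShape (PuncturedCubePoset S) G)
    S (fun S _ _ _ _ => ?_) (fun S _ _ ih _ _ => ?_)
  · exact preservesColimitsOfShape_of_isTerminal
      (PuncturedCubePoset.isTerminalEmpty (Fintype.card_le_one_iff_subsingleton.mpr ‹_›)) G
  · obtain ⟨s⟩ : Nonempty S := inferInstance
    have := ih {x // x ≠ s} (Finite.card_subtype_lt (x := s) (by simp))
    exact PuncturedCubePoset.preservesColimitsOfShape_of_subtype_ne s G hG Fintype.one_lt_card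

theorem isIso_colimit_post_of_preserves_pushouts_general
    {C : Type*} {D : Type*} [Category C] [Category D]
    [HasFiniteColimits C] [HasFiniteColimits D] (G : C ⥤ D)
    (hG : ∀ {P X Y Z : C} (f : P ⟶ X) (g : P ⟶ Y) (inl : X ⟶ Z) (inr : Y ⟶ Z),
      IsPushout f g inl inr → IsPushout (G.map f) (G.map g) (G.map inl) (G.map inr))
    (S : Type) [Fintype S] [DecidableEq S]
    (F : PuncturedCubePoset S ⥤ C) :
    IsIso (colimit.post F G) :=
  have := preservesColimitsOfShape_puncturedCubePoset G hG S
  inferInstance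

/-- A functor preserving pushout squares preserves colimits of punctured cubes: for every
finite set `S` with `|S| ≥ 2` and every punctured `S`-cube `F : P_{≤|S|-1}(S) ⥤ C`, the
canonical map `colim (G ∘ F) ⟶ G (colim F)` is an isomorphism.
(Claim in the proof of Proposition 3.1.12, via Lemma 3.1.11.) -/
theorem isIso_colimit_post_of_preserves_pushouts
    {C : Type*} {D : Type*} [Category C] [Category D]
    [HasFiniteColimits C] [HasFiniteColimits D] (G : C ⥤ D)
    (hG : ∀ {P X Y Z : C} (f : P ⟶ X) (g : P ⟶ Y) (inl : X ⟶ Z) (inr : Y ⟶ Z),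
      IsPushout f g inl inr → IsPushout (G.map f) (G.map g) (G.map inl) (G.map inr))
    (S : Type) [Fintype S] [DecidableEq S] (hS : 2 ≤ Fintype.card S)
    (F : PuncturedCubePoset S ⥤ C) :
    IsIso (colimit.post F G) :=
  isIso_colimit_post_of_preserves_pushouts_general G hG S F
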